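/- arXiv:1406.0394 — 4 statements merged into one kernel-verified Lean document; each statement's English description precedes it below -/
import Mathlib

section
/- Let Y be a centered Gaussian vector in ℝⁿ with covariance matrix 𝔅, let w ∈ Δₙ (w has nonnegative entries summing to 1), and let a₁, …, aₙ > 0. Then by Jensen's (weighted AM–GM) inequality, ∑ᵢ aᵢ·e^{Yᵢ} ≤ e^{−k} implies ∑ᵢ wᵢYᵢ + ∑ᵢ wᵢ log(aᵢ/wᵢ) ≤ −k (for wᵢ > 0, interpreting wᵢ log(aᵢ/wᵢ) = 0 when wᵢ = 0), hence P[∑ᵢ aᵢ e^{Yᵢ} ≤ e^{−k}] ≤ N(−(k + ∑ᵢ wᵢ log(aᵢ/wᵢ))/√(wᵀ𝔅w)) whenever k + ∑ᵢ wᵢ log(aᵢ/wᵢ) > 0 and wᵀ𝔅w > 0, where N is the standard normal CDF. -/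
open MeasureTheory ProbabilityTheory Matrix

noncomputable def stdNormalCDF (x : ℝ) : ℝ :=
  ∫ t in Set.Iic x, Real.exp (-t ^ 2 / 2) / Real.sqrt (2 * Real.pi)

/-! Jensen's inequality for `exp` at the points `yᵢ + log (aᵢ / wᵢ)` turns `∑ aᵢ e^{Yᵢ} ≤ e^{-k}`
into the linear event `∑ wᵢ Yᵢ ≤ -(k + ∑ wᵢ log (aᵢ / wᵢ))`. The left side is a centered Gaussian
of variance `wᵀ𝔅w`, so the probability of that event is `N(-(k + ∑ wᵢ log (aᵢ / wᵢ)) / √(wᵀ𝔅w))`. -/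

/-- The case `w = 0` holds because `0 ≤ a e^y`; for `w > 0` it is an equality. -/
lemma Real.mul_exp_add_log_div_le {w a : ℝ} (hw : 0 ≤ w) (ha : 0 < a) (y : ℝ) :
    w * Real.exp (y + Real.log (a / w)) ≤ a * Real.exp y := by
  rcases hw.eq_or_lt with rfl | hw
  · simpa using by positivity
  · rw [Real.exp_add, Real.exp_log (div_pos ha hw)]
    field_simp
    rfl

lemma Real.exp_sum_mul_add_log_div_le {ι : Type*} {s : Finset ι} {w a : ι → ℝ}
    (hw0 : ∀ i ∈ s, 0 ≤ w i) (hw1 : ∑ i ∈ s, w i = 1) (ha : ∀ i ∈ s, 0 < a i) (y : ι → ℝ) :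
    Real.exp (∑ i ∈ s, w i * (y i + Real.log (a i / w i))) ≤ ∑ i ∈ s, a i * Real.exp (y i) :=
  calc Real.exp (∑ i ∈ s, w i * (y i + Real.log (a i / w i)))
      ≤ ∑ i ∈ s, w i * Real.exp (y i + Real.log (a i / w i)) :=
        convexOn_exp.map_sum_le hw0 hw1 fun _ _ => Set.mem_univ _
    _ ≤ ∑ i ∈ s, a i * Real.exp (y i) :=
        Finset.sum_le_sum fun i hi => Real.mul_exp_add_log_div_le (hw0 i hi) (ha i hi) (y i)

lemma Real.sum_mul_add_sum_mul_log_div_le_of_sum_mul_exp_le {ι : Type*} {s : Finset ι}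
    {w a y : ι → ℝ} (hw0 : ∀ i ∈ s, 0 ≤ w i) (hw1 : ∑ i ∈ s, w i = 1) (ha : ∀ i ∈ s, 0 < a i)
    {k : ℝ} (h : ∑ i ∈ s, a i * Real.exp (y i) ≤ Real.exp (-k)) :
    ∑ i ∈ s, w i * y i + ∑ i ∈ s, w i * Real.log (a i / w i) ≤ -k := by
  rw [← Finset.sum_add_distrib, ← Real.exp_le_exp]
  simp only [← mul_add]
  exact (Real.exp_sum_mul_add_log_div_le hw0 hw1 ha y).trans h

lemma gaussianReal_zero_one_Iic_toReal (x : ℝ) :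
    (gaussianReal 0 1 (Set.Iic x)).toReal = stdNormalCDF x := by
  rw [gaussianReal_apply_eq_integral 0 one_ne_zero,
    ENNReal.toReal_ofReal (integral_nonneg fun t => gaussianPDFReal_nonneg 0 1 t)]
  refine setIntegral_congr_fun measurableSet_Iic fun t _ => ?_
  simp [gaussianPDFReal, div_eq_inv_mul]

lemma gaussianReal_zero_Iic_toReal {v : ℝ} (hv : 0 < v) (x : ℝ) :
    (gaussianReal 0 v.toNNReal (Set.Iic x)).toReal = stdNormalCDF (x / Real.sqrt v) := by
  have hσ : 0 < Real.sqrt v := Real.sqrt_pos.mpr hv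
  have hscale : (gaussianReal 0 1).map (Real.sqrt v * ·) = gaussianReal 0 v.toNNReal := by
    rw [gaussianReal_map_const_mul, mul_zero]
    congr
    ext
    simp [Real.sq_sqrt hv.le, Real.coe_toNNReal _ hv.le]
  rw [← hscale, Measure.map_apply (by fun_prop) measurableSet_Iic,
    ← gaussianReal_zero_one_Iic_toReal]
  congr 3
  ext t
  simp [← le_div_iff₀' hσ]

lemma measure_le_toReal_eq_stdNormalCDF {Ω : Type*} [MeasurableSpace Ω] {P : Measure Ω}
    {X : Ω → ℝ} (hX : Measurable X) {v : ℝ} (hv : 0 < v)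
    (hmap : P.map X = gaussianReal 0 v.toNNReal) (x : ℝ) :
    (P {ω | X ω ≤ x}).toReal = stdNormalCDF (x / Real.sqrt v) := by
  rw [← gaussianReal_zero_Iic_toReal hv, ← hmap, Measure.map_apply hX measurableSet_Iic]
  rfl

theorem gaussian_basket_upper_bound_general {Ω : Type*} [MeasurableSpace Ω] (Pm : Measure Ω)
    [IsProbabilityMeasure Pm] (n : ℕ)
    (Y : Fin n → Ω → ℝ) (hmeas : ∀ i, Measurable (Y i))
    (𝔅 : Matrix (Fin n) (Fin n) ℝ)
    (hGauss : ∀ v : Fin n → ℝ,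
      Measure.map (fun ω => ∑ i, v i * Y i ω) Pm =
        gaussianReal 0 (Real.toNNReal (v ⬝ᵥ 𝔅.mulVec v)))
    (w : Fin n → ℝ) (hw0 : ∀ i, 0 ≤ w i) (hw1 : ∑ i, w i = 1)
    (a : Fin n → ℝ) (ha : ∀ i, 0 < a i) (k : ℝ)
    (hvar : 0 < w ⬝ᵥ 𝔅.mulVec w) :
    (∀ ω, ∑ i, a i * Real.exp (Y i ω) ≤ Real.exp (-k) →
      (∑ i, w i * Y i ω) + ∑ i, w i * Real.log (a i / w i) ≤ -k) ∧
    (Pm {ω | ∑ i, a i * Real.exp (Y i ω) ≤ Real.exp (-k)}).toReal ≤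
      stdNormalCDF (-(k + ∑ i, w i * Real.log (a i / w i)) /
        Real.sqrt (w ⬝ᵥ 𝔅.mulVec w)) := by
  have hpoint : ∀ ω, ∑ i, a i * Real.exp (Y i ω) ≤ Real.exp (-k) →
      (∑ i, w i * Y i ω) + ∑ i, w i * Real.log (a i / w i) ≤ -k := fun ω =>
    Real.sum_mul_add_sum_mul_log_div_le_of_sum_mul_exp_le (fun i _ => hw0 i) hw1 fun i _ => ha i
  refine ⟨hpoint, ?_⟩
  rw [← measure_le_toReal_eq_stdNormalCDF (by fun_prop) hvar (hGauss w)]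
  refine ENNReal.toReal_mono (measure_ne_top _ _) (measure_mono fun ω hω => ?_)
  have := hpoint ω hω
  simp only [Set.mem_ofPred_eq]
  linarith

/-- For a centered Gaussian vector `Y` with covariance matrix `𝔅` (encoded via the law of
each linear combination), weights `w` in the simplex and positive coefficients `a`:
(i) pointwise, ∑ aᵢ e^{Yᵢ} ≤ e^{−k} implies ∑ wᵢYᵢ + ∑ wᵢ log(aᵢ/wᵢ) ≤ −k;
(ii) P[∑ aᵢ e^{Yᵢ} ≤ e^{−k}] ≤ N(−(k + ∑ wᵢ log(aᵢ/wᵢ))/√(wᵀ𝔅w)). -/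
theorem gaussian_basket_upper_bound {Ω : Type*} [MeasurableSpace Ω] (Pm : Measure Ω)
    [IsProbabilityMeasure Pm] (n : ℕ) (hn : 0 < n)
    (Y : Fin n → Ω → ℝ) (hmeas : ∀ i, Measurable (Y i))
    (𝔅 : Matrix (Fin n) (Fin n) ℝ) (h𝔅 : 𝔅.IsSymm)
    (hGauss : ∀ v : Fin n → ℝ,
      Measure.map (fun ω => ∑ i, v i * Y i ω) Pm =
        gaussianReal 0 (Real.toNNReal (v ⬝ᵥ 𝔅.mulVec v)))
    (w : Fin n → ℝ) (hw0 : ∀ i, 0 ≤ w i) (hw1 : ∑ i, w i = 1)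
    (a : Fin n → ℝ) (ha : ∀ i, 0 < a i) (k : ℝ)
    (hk : 0 < k + ∑ i, w i * Real.log (a i / w i))
    (hvar : 0 < w ⬝ᵥ 𝔅.mulVec w) :
    (∀ ω, ∑ i, a i * Real.exp (Y i ω) ≤ Real.exp (-k) →
      (∑ i, w i * Y i ω) + ∑ i, w i * Real.log (a i / w i) ≤ -k) ∧
    (Pm {ω | ∑ i, a i * Real.exp (Y i ω) ≤ Real.exp (-k)}).toReal ≤
      stdNormalCDF (-(k + ∑ i, w i * Real.log (a i / w i)) /
        Real.sqrt (w ⬝ᵥ 𝔅.mulVec w)) :=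
  gaussian_basket_upper_bound_general Pm n Y hmeas 𝔅 hGauss w hw0 hw1 a ha k hvar
end

section
/- If a copula C on [0,1]ⁿ has strong lower tail dependence, i.e., λ_L = lim_{u→0⁺} C(u,…,u)/u exists and λ_L > 0, then for all α₁,…,αₙ > 0, the weak lower tail dependence function satisfies χ(α₁,…,αₙ) = lim_{u→0⁺} (minᵢ αᵢ log u)/(log C(u^{α₁},…,u^{αₙ})) = 1. -/
open Filter

/-- If a copula C has strong lower tail dependence (λ_L = lim_{u→0⁺} C(u,…,u)/u > 0),
then its weak lower tail dependence function satisfies χ(α₁,…,αₙ) = 1 for all αᵢ > 0. -/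
theorem strong_tail_dep_implies_chi_one (n : ℕ) (hn : 0 < n)
    (C : (Fin n → ℝ) → ℝ)
    (hmono : ∀ u v : Fin n → ℝ, (∀ i, u i ∈ Set.Icc (0:ℝ) 1) →
      (∀ i, v i ∈ Set.Icc (0:ℝ) 1) → (∀ i, u i ≤ v i) → C u ≤ C v)
    (hzero : ∀ u : Fin n → ℝ, (∀ i, u i ∈ Set.Icc (0:ℝ) 1) →
      (∃ k, u k = 0) → C u = 0)
    (hmargin : ∀ u : Fin n → ℝ, (∀ i, u i ∈ Set.Icc (0:ℝ) 1) →
      ∀ k, (∀ i, i ≠ k → u i = 1) → C u = u k)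
    (hfrechet : ∀ u : Fin n → ℝ, (∀ i, u i ∈ Set.Icc (0:ℝ) 1) → C u ≤ ⨅ i, u i)
    (lamL : ℝ) (hlam : 0 < lamL)
    (hlim : Tendsto (fun u : ℝ => C (fun _ => u) / u) (nhdsWithin 0 (Set.Ioi 0))
      (nhds lamL)) :
    ∀ α : Fin n → ℝ, (∀ i, 0 < α i) →
      Tendsto (fun u : ℝ =>
          (⨅ i, α i * Real.log u) / Real.log (C (fun i => u ^ α i)))
        (nhdsWithin 0 (Set.Ioi 0)) (nhds 1) := by
  intro α hα
  haveI : Nonempty (Fin n) := Fin.pos_iff_nonempty.mp hn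
  obtain ⟨i₀, hi₀⟩ := Finite.exists_max α
  set β := α i₀ with hβdef
  have hβ : 0 < β := hα i₀
  set c : ℝ := min (lamL / 2) 1 with hcdef
  have hc : 0 < c := lt_min (by linarith) one_pos
  have hc1 : c ≤ 1 := min_le_right _ _
  have hL : Real.log c ≤ 0 := Real.log_nonpos hc.le hc1
  set l := nhdsWithin (0:ℝ) (Set.Ioi 0) with hldef
  -- tendsto of u ↦ u^β into 𝓝[>] 0
  have hcomp : Tendsto (fun u : ℝ => u ^ β) l (nhdsWithin 0 (Set.Ioi 0)) := by
    rw [tendsto_nhdsWithin_iff]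
    constructor
    · have h1 : Tendsto (fun u : ℝ => u ^ β) (nhds 0) (nhds 0) := by
        have h2 := (Real.continuousAt_rpow_const 0 β (Or.inr hβ.le)).tendsto
        simpa [Real.zero_rpow hβ.ne'] using h2
      exact h1.mono_left nhdsWithin_le_nhds
    · filter_upwards [self_mem_nhdsWithin] with u hu
      exact Real.rpow_pos_of_pos hu _
  have hq : Tendsto (fun u : ℝ => C (fun _ => u ^ β) / u ^ β) l (nhds lamL) :=
    hlim.comp hcomp
  have hev2 : ∀ᶠ u in l, lamL / 2 < C (fun _ => u ^ β) / u ^ β :=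
    hq.eventually_const_lt (by linarith)
  have hev1 : ∀ᶠ u in l, u < 1 :=
    eventually_nhdsWithin_of_eventually_nhds (eventually_lt_nhds one_pos)
  have hev0 : ∀ᶠ u in l, 0 < u := self_mem_nhdsWithin
  -- the comparison function g
  have hx : Tendsto (fun u : ℝ => β * Real.log u) l atBot :=
    Real.tendsto_log_nhdsGT_zero.const_mul_atBot hβ
  have hg : Tendsto (fun u : ℝ => β * Real.log u / (β * Real.log u + Real.log c))
      l (nhds 1) := by
    have h0 : Tendsto (fun x : ℝ => x / (x + Real.log c)) atBot (nhds 1) := by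
      have h1 : Tendsto (fun x : ℝ => 1 + Real.log c / x) atBot (nhds 1) := by
        have h2 : Tendsto (fun x : ℝ => Real.log c / x) atBot (nhds 0) := by
          have hinv : Tendsto (fun x : ℝ => x⁻¹) atBot (nhds 0) := by
            have h4 := (tendsto_inv_atTop_zero.comp tendsto_neg_atBot_atTop (α := ℝ)).neg
            simpa [Function.comp, inv_neg] using h4
          simpa [div_eq_mul_inv] using hinv.const_mul (Real.log c)
        simpa using tendsto_const_nhds.add h2
      have h3 : Tendsto (fun x : ℝ => (1 + Real.log c / x)⁻¹) atBot (nhds 1) := by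
        simpa using h1.inv₀ (by norm_num)
      refine h3.congr' ?_
      filter_upwards [eventually_lt_atBot (min (-Real.log c) 0)] with x hx
      have hx0 : x < 0 := lt_of_lt_of_le hx (min_le_right _ _)
      have hxc : x + Real.log c < 0 := by
        have := lt_of_lt_of_le hx (min_le_left _ _); linarith
      rw [one_add_div hx0.ne, inv_div]
    exact h0.comp hx
  -- squeeze
  refine tendsto_of_tendsto_of_tendsto_of_le_of_le' hg tendsto_const_nhds ?_ ?_
  · -- lower bound
    filter_upwards [hev0, hev1, hev2] with u hu0 hu1 hq2
    have hlogu : Real.log u < 0 := Real.log_neg hu0 hu1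
    have hmem : ∀ i, (u ^ α i) ∈ Set.Icc (0:ℝ) 1 := fun i =>
      ⟨(Real.rpow_pos_of_pos hu0 _).le, Real.rpow_le_one hu0.le hu1.le (hα i).le⟩
    have hmemβ : ∀ (_ : Fin n), (u ^ β) ∈ Set.Icc (0:ℝ) 1 := fun _ =>
      ⟨(Real.rpow_pos_of_pos hu0 _).le, Real.rpow_le_one hu0.le hu1.le hβ.le⟩
    have hβpos : 0 < u ^ β := Real.rpow_pos_of_pos hu0 _
    have hCl : c * u ^ β ≤ C (fun i => u ^ α i) := by
      have h1 : C (fun _ => u ^ β) ≤ C (fun i => u ^ α i) := by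
        refine hmono _ _ hmemβ hmem fun i =>
          Real.rpow_le_rpow_of_exponent_ge hu0 hu1.le (hi₀ i)
      have h2 : (lamL / 2) * u ^ β ≤ C (fun _ => u ^ β) := by
        rw [← le_div_iff₀ hβpos]; exact hq2.le
      have h3 : c * u ^ β ≤ (lamL / 2) * u ^ β :=
        mul_le_mul_of_nonneg_right (min_le_left _ _) hβpos.le
      linarith
    have hCpos : 0 < C (fun i => u ^ α i) := lt_of_lt_of_le (by positivity) hCl
    have hCu : C (fun i => u ^ α i) ≤ u ^ β := by
      refine le_trans (hfrechet _ hmem) ?_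
      exact ciInf_le (Finite.bddBelow_range _) i₀
    have hlogC_le : Real.log (C (fun i => u ^ α i)) ≤ β * Real.log u := by
      calc Real.log (C (fun i => u ^ α i)) ≤ Real.log (u ^ β) :=
        Real.log_le_log hCpos hCu
      _ = β * Real.log u := Real.log_rpow hu0 _
    have hlogC_ge : β * Real.log u + Real.log c ≤ Real.log (C (fun i => u ^ α i)) := by
      have := Real.log_le_log (by positivity) hCl
      rwa [Real.log_mul hc.ne' hβpos.ne', Real.log_rpow hu0, add_comm] at this
    have hinf : (⨅ i, α i * Real.log u) = β * Real.log u := by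
      refine le_antisymm (ciInf_le (Finite.bddBelow_range _) i₀) ?_
      exact le_ciInf fun i => mul_le_mul_of_nonpos_right (hi₀ i) hlogu.le
    rw [hinf]
    have hxneg : β * Real.log u < 0 := mul_neg_of_pos_of_neg hβ hlogu
    have hyneg : Real.log (C (fun i => u ^ α i)) < 0 :=
      lt_of_le_of_lt hlogC_le hxneg
    have hdneg : β * Real.log u + Real.log c < 0 := by linarith
    have key : (-(β * Real.log u)) / (-(β * Real.log u + Real.log c)) ≤
        (-(β * Real.log u)) / (-(Real.log (C (fun i => u ^ α i)))) :=
      div_le_div_of_nonneg_left (by linarith) (by linarith) (by linarith)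
    calc β * Real.log u / (β * Real.log u + Real.log c)
        = (-(β * Real.log u)) / (-(β * Real.log u + Real.log c)) := (neg_div_neg_eq _ _).symm
      _ ≤ (-(β * Real.log u)) / (-(Real.log (C (fun i => u ^ α i)))) := key
      _ = β * Real.log u / Real.log (C (fun i => u ^ α i)) := neg_div_neg_eq _ _
  · -- upper bound ≤ 1
    filter_upwards [hev0, hev1, hev2] with u hu0 hu1 hq2
    have hlogu : Real.log u < 0 := Real.log_neg hu0 hu1
    have hmem : ∀ i, (u ^ α i) ∈ Set.Icc (0:ℝ) 1 := fun i =>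
      ⟨(Real.rpow_pos_of_pos hu0 _).le, Real.rpow_le_one hu0.le hu1.le (hα i).le⟩
    have hmemβ : ∀ (_ : Fin n), (u ^ β) ∈ Set.Icc (0:ℝ) 1 := fun _ =>
      ⟨(Real.rpow_pos_of_pos hu0 _).le, Real.rpow_le_one hu0.le hu1.le hβ.le⟩
    have hβpos : 0 < u ^ β := Real.rpow_pos_of_pos hu0 _
    have hCl : c * u ^ β ≤ C (fun i => u ^ α i) := by
      have h1 : C (fun _ => u ^ β) ≤ C (fun i => u ^ α i) := by
        refine hmono _ _ hmemβ hmem fun i =>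
          Real.rpow_le_rpow_of_exponent_ge hu0 hu1.le (hi₀ i)
      have h2 : (lamL / 2) * u ^ β ≤ C (fun _ => u ^ β) := by
        rw [← le_div_iff₀ hβpos]; exact hq2.le
      have h3 : c * u ^ β ≤ (lamL / 2) * u ^ β :=
        mul_le_mul_of_nonneg_right (min_le_left _ _) hβpos.le
      linarith
    have hCpos : 0 < C (fun i => u ^ α i) := lt_of_lt_of_le (by positivity) hCl
    have hCu : C (fun i => u ^ α i) ≤ u ^ β := by
      refine le_trans (hfrechet _ hmem) ?_
      exact ciInf_le (Finite.bddBelow_range _) i₀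
    have hlogC_le : Real.log (C (fun i => u ^ α i)) ≤ β * Real.log u := by
      calc Real.log (C (fun i => u ^ α i)) ≤ Real.log (u ^ β) :=
        Real.log_le_log hCpos hCu
      _ = β * Real.log u := Real.log_rpow hu0 _
    have hinf : (⨅ i, α i * Real.log u) = β * Real.log u := by
      refine le_antisymm (ciInf_le (Finite.bddBelow_range _) i₀) ?_
      exact le_ciInf fun i => mul_le_mul_of_nonpos_right (hi₀ i) hlogu.le
    rw [hinf]
    have hxneg : β * Real.log u < 0 := mul_neg_of_pos_of_neg hβ hlogu
    have hyneg : Real.log (C (fun i => u ^ α i)) < 0 := lt_of_le_of_lt hlogC_le hxneg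
    rw [div_le_one_iff]
    right; right
    exact ⟨hyneg, hlogC_le⟩
end

section
/- Let C be an Archimedean copula with generator φ, i.e., C(u₁,…,uₙ) = φ⁻¹(φ(u₁)+⋯+φ(uₙ)), where φ : (0,1] → [0,∞) is continuous, strictly decreasing, φ(1) = 0, and log φ⁻¹ is regularly varying at ∞ with index λ > 0 (i.e., −log φ⁻¹ ∈ R_λ). Then for all α₁,…,αₙ > 0, the weak lower tail dependence function of C is χ(α₁,…,αₙ) = max(α₁,…,αₙ)/(α₁^{1/λ} + ⋯ + αₙ^{1/λ})^λ. -/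
/-!
Write `L x = -log (φ⁻¹ x)`, a nondecreasing function in `R_λ`, so that `log u = -L (φ u)`.
From `L (φ (u ^ α)) = α L (φ u)` and the monotonicity of `L`, regular variation forces
`φ (u ^ αᵢ) ~ αᵢ ^ (1/λ) φ u` as `u → 0⁺`; summing, `∑ φ (u ^ αᵢ) ~ S φ u` with
`S = ∑ αᵢ ^ (1/λ)`, and regular variation once more gives `L (∑ φ (u ^ αᵢ)) / L (φ u) → S ^ λ`.
Since `min αᵢ log u = (max αᵢ) log u`, the ratio defining `χ` tends to `max αᵢ / S ^ λ`.
-/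

open Filter Topology Set

def IsRegularlyVarying (L : ℝ → ℝ) (lam : ℝ) : Prop :=
  ∀ t > (0 : ℝ), Tendsto (fun x => L (t * x) / L x) atTop (𝓝 (t ^ lam))

namespace IsRegularlyVarying

variable {L : ℝ → ℝ} {lam c : ℝ} {β : Type*} {l : Filter β} {g h : β → ℝ}

theorem tendsto_comp_div_comp (hL : IsRegularlyVarying L lam) (hmono : MonotoneOn L (Ici 0))
    (hc : 0 < c) (hh : Tendsto h l atTop) (hLh : ∀ᶠ b in l, 0 < L (h b))
    (hg : ∀ᶠ b in l, 0 ≤ g b) (hgh : Tendsto (fun b => g b / h b) l (𝓝 c)) :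
    Tendsto (fun b => L (g b) / L (h b)) l (𝓝 (c ^ lam)) := by
  have hpos : ∀ᶠ b in l, 0 < h b := hh.eventually_gt_atTop 0
  have hcont : ContinuousAt (fun t : ℝ => t ^ lam) c :=
    Real.continuousAt_rpow_const _ _ (Or.inl hc.ne')
  refine tendsto_order.2 ⟨fun a ha => ?_, fun a ha => ?_⟩
  · obtain ⟨t, ⟨ht0, htc⟩, hat⟩ : ∃ t ∈ Ioo 0 c, a < t ^ lam :=
      (Eventually.and (Ioo_mem_nhdsLT hc)
        (nhdsWithin_le_nhds (hcont.eventually (lt_mem_nhds ha)))).exists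
    filter_upwards [((hL t ht0).comp hh).eventually_const_lt hat,
      hgh.eventually_const_lt htc, hpos, hLh] with b hab htg hhb hLhb
    have hthg : t * h b ≤ g b := ((lt_div_iff₀ hhb).1 htg).le
    calc a < L (t * h b) / L (h b) := hab
      _ ≤ L (g b) / L (h b) := by
        gcongr
        have hth : 0 ≤ t * h b := by positivity
        exact hmono hth (hth.trans hthg) hthg
  · obtain ⟨t, hct, hta⟩ : ∃ t ∈ Ioi c, t ^ lam < a :=
      (Eventually.and (self_mem_nhdsWithin : Ioi c ∈ 𝓝[>] c)
        (nhdsWithin_le_nhds (hcont.eventually (gt_mem_nhds ha)))).exists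
    have ht0 : 0 < t := hc.trans hct
    filter_upwards [((hL t ht0).comp hh).eventually_lt_const hta,
      hgh.eventually_lt_const hct, hpos, hLh, hg] with b hab hgt hhb hLhb hgb
    calc L (g b) / L (h b) ≤ L (t * h b) / L (h b) := by
          gcongr
          exact hmono hgb (mem_Ici.2 (by positivity)) ((div_lt_iff₀ hhb).1 hgt).le
      _ < a := hab

theorem tendsto_div_of_tendsto_comp_div (hL : IsRegularlyVarying L lam)
    (hmono : MonotoneOn L (Ici 0)) (hlam : 0 < lam) (hc : 0 < c) (hh : Tendsto h l atTop)
    (hLh : ∀ᶠ b in l, 0 < L (h b)) (hg : ∀ᶠ b in l, 0 ≤ g b)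
    (hLgh : Tendsto (fun b => L (g b) / L (h b)) l (𝓝 (c ^ lam))) :
    Tendsto (fun b => g b / h b) l (𝓝 c) := by
  have hpos : ∀ᶠ b in l, 0 < h b := hh.eventually_gt_atTop 0
  refine tendsto_order.2 ⟨fun a ha => ?_, fun a ha => ?_⟩
  · obtain ⟨t, hat, htc⟩ := exists_between (max_lt ha hc)
    have ht0 : 0 < t := (le_max_right a 0).trans_lt hat
    filter_upwards [((hL t ht0).comp hh).eventually_lt hLgh (Real.rpow_lt_rpow ht0.le htc hlam),
      hpos, hLh, hg] with b hLt hhb hLhb hgb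
    have hthg : t * h b < g b :=
      hmono.reflect_lt (mem_Ici.2 (by positivity)) hgb ((div_lt_div_iff_of_pos_right hLhb).1 hLt)
    exact ((le_max_left a 0).trans_lt hat).trans ((lt_div_iff₀ hhb).2 hthg)
  · obtain ⟨t, hct, hta⟩ := exists_between ha
    have ht0 : 0 < t := hc.trans hct
    filter_upwards [hLgh.eventually_lt ((hL t ht0).comp hh) (Real.rpow_lt_rpow hc.le hct hlam),
      hpos, hLh, hg] with b hLt hhb hLhb hgb
    have hgth : g b < t * h b :=
      hmono.reflect_lt hgb (mem_Ici.2 (by positivity)) ((div_lt_div_iff_of_pos_right hLhb).1 hLt)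
    exact ((div_lt_iff₀ hhb).2 hgth).trans hta

end IsRegularlyVarying

theorem eventually_rpow_mem_Ioc {a : ℝ} (ha : 0 ≤ a) :
    ∀ᶠ u in 𝓝[>] (0 : ℝ), u ^ a ∈ Ioc 0 1 := by
  filter_upwards [Ioo_mem_nhdsGT one_pos] with u hu
  exact ⟨Real.rpow_pos_of_pos hu.1 _, Real.rpow_le_one hu.1.le hu.2.le ha⟩

section Generator

variable {φ ψ : ℝ → ℝ}

theorem antitoneOn_of_rightInvOn_of_strictAntiOn (hφ : StrictAntiOn φ (Ioc 0 1))
    (hψ : MapsTo ψ (Ici 0) (Ioc 0 1)) (hinv : RightInvOn ψ φ (Ici 0)) :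
    AntitoneOn ψ (Ici 0) := fun a ha b hb hab => by
  rwa [← hφ.le_iff_ge (hψ ha) (hψ hb), hinv ha, hinv hb]

theorem monotoneOn_neg_log_comp (hφ : StrictAntiOn φ (Ioc 0 1))
    (hψ : MapsTo ψ (Ici 0) (Ioc 0 1)) (hinv : RightInvOn ψ φ (Ici 0)) :
    MonotoneOn (fun x => -Real.log (ψ x)) (Ici 0) := fun _ ha _ hb hab =>
  neg_le_neg (Real.log_le_log (hψ hb).1
    (antitoneOn_of_rightInvOn_of_strictAntiOn hφ hψ hinv ha hb hab))

theorem tendsto_nhdsGT_zero_atTop_of_rightInvOn (hφ : StrictAntiOn φ (Ioc 0 1))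
    (hψ : MapsTo ψ (Ici 0) (Ioc 0 1)) (hinv : RightInvOn ψ φ (Ici 0)) :
    Tendsto φ (𝓝[>] 0) atTop := by
  refine tendsto_atTop.2 fun M => ?_
  have hM : max M 0 ∈ Ici (0 : ℝ) := le_max_right M 0
  filter_upwards [Ioo_mem_nhdsGT (hψ hM).1] with u hu
  calc M ≤ max M 0 := le_max_left M 0
    _ = φ (ψ (max M 0)) := (hinv hM).symm
    _ ≤ φ u := (hφ ⟨hu.1, hu.2.le.trans (hψ hM).2⟩ (hψ hM) hu.2).le

theorem eventually_neg_log_comp_pos (hinvl : LeftInvOn ψ φ (Ioc 0 1)) :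
    ∀ᶠ u in 𝓝[>] (0 : ℝ), 0 < -Real.log (ψ (φ u)) := by
  filter_upwards [Ioo_mem_nhdsGT one_pos] with u hu
  rw [hinvl ⟨hu.1, hu.2.le⟩, neg_pos]
  exact Real.log_neg hu.1 hu.2

theorem tendsto_comp_rpow_div_of_isRegularlyVarying {lam a : ℝ}
    (hφ : StrictAntiOn φ (Ioc 0 1)) (hφnonneg : MapsTo φ (Ioc 0 1) (Ici 0))
    (hψ : MapsTo ψ (Ici 0) (Ioc 0 1)) (hinv : RightInvOn ψ φ (Ici 0))
    (hinvl : LeftInvOn ψ φ (Ioc 0 1))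
    (hL : IsRegularlyVarying (fun x => -Real.log (ψ x)) lam) (hlam : 0 < lam) (ha : 0 < a) :
    Tendsto (fun u => φ (u ^ a) / φ u) (𝓝[>] 0) (𝓝 (a ^ (1 / lam))) := by
  refine hL.tendsto_div_of_tendsto_comp_div (monotoneOn_neg_log_comp hφ hψ hinv) hlam
    (Real.rpow_pos_of_pos ha _) (tendsto_nhdsGT_zero_atTop_of_rightInvOn hφ hψ hinv)
    (eventually_neg_log_comp_pos hinvl)
    ((eventually_rpow_mem_Ioc ha.le).mono fun u hu => hφnonneg hu) ?_
  rw [← Real.rpow_mul ha.le, one_div_mul_cancel hlam.ne', Real.rpow_one]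
  refine tendsto_const_nhds.congr' ?_
  filter_upwards [Ioo_mem_nhdsGT one_pos, eventually_rpow_mem_Ioc ha.le,
    eventually_neg_log_comp_pos hinvl] with u hu hua hpos
  rw [hinvl ⟨hu.1, hu.2.le⟩] at hpos ⊢
  rw [hinvl hua, Real.log_rpow hu.1, ← mul_neg, mul_div_assoc, div_self hpos.ne', mul_one]

end Generator

theorem archimedean_chi_general (n : ℕ) (hn : 0 < n) (lam : ℝ) (hlam : 0 < lam)
    (φ φinv : ℝ → ℝ)
    (hφanti : StrictAntiOn φ (Set.Ioc 0 1))
    (hφnonneg : ∀ u ∈ Set.Ioc (0:ℝ) 1, 0 ≤ φ u)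
    (hinvl : ∀ u ∈ Set.Ioc (0:ℝ) 1, φinv (φ u) = u)
    (hinvr : ∀ s : ℝ, 0 ≤ s → φ (φinv s) = s)
    (hinvrange : ∀ s : ℝ, 0 ≤ s → φinv s ∈ Set.Ioc (0:ℝ) 1)
    (hrv : ∀ t > (0 : ℝ),
      Tendsto (fun x => (-Real.log (φinv (t * x))) / (-Real.log (φinv x)))
        atTop (nhds (t ^ lam))) :
    ∀ α : Fin n → ℝ, (∀ i, 0 < α i) →
      Tendsto (fun u : ℝ =>
          (⨅ i, α i * Real.log u) / Real.log (φinv (∑ i, φ (u ^ α i))))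
        (nhdsWithin 0 (Set.Ioi 0))
        (nhds ((⨆ i, α i) / (∑ i, (α i) ^ (1 / lam)) ^ lam)) := by
  intro α hα
  have : Nonempty (Fin n) := Fin.pos_iff_nonempty.mp hn
  have hL : IsRegularlyVarying (fun x => -Real.log (φinv x)) lam := hrv
  have hφnonneg' : MapsTo φ (Ioc 0 1) (Ici 0) := fun u hu => hφnonneg u hu
  have hψ : MapsTo φinv (Ici 0) (Ioc 0 1) := fun s hs => hinvrange s hs
  have hinv : RightInvOn φinv φ (Ici 0) := fun s hs => hinvr s hs
  have hinvl' : LeftInvOn φinv φ (Ioc 0 1) := fun u hu => hinvl u hu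
  set S := ∑ i, α i ^ (1 / lam)
  have hS : 0 < S := Finset.sum_pos (fun i _ => Real.rpow_pos_of_pos (hα i) _) Finset.univ_nonempty
  have hsum : Tendsto (fun u => (∑ i, φ (u ^ α i)) / φ u) (𝓝[>] 0) (𝓝 S) := by
    simpa only [Finset.sum_div] using tendsto_finsetSum Finset.univ fun i _ =>
      tendsto_comp_rpow_div_of_isRegularlyVarying hφanti hφnonneg' hψ hinv hinvl' hL hlam (hα i)
  have hsum_nonneg : ∀ᶠ u in 𝓝[>] (0 : ℝ), 0 ≤ ∑ i, φ (u ^ α i) :=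
    (eventually_all.2 fun i => eventually_rpow_mem_Ioc (hα i).le).mono fun u hu =>
      Finset.sum_nonneg fun i _ => hφnonneg' (hu i)
  have hratio := hL.tendsto_comp_div_comp (monotoneOn_neg_log_comp hφanti hψ hinv) hS
    (tendsto_nhdsGT_zero_atTop_of_rightInvOn hφanti hψ hinv) (eventually_neg_log_comp_pos hinvl')
    hsum_nonneg hsum
  refine (tendsto_const_nhds.div hratio (Real.rpow_pos_of_pos hS _).ne').congr' ?_
  filter_upwards [Ioo_mem_nhdsGT one_pos] with u hu
  simp only [Pi.div_apply, hinvl u ⟨hu.1, hu.2.le⟩]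
  rw [div_div_eq_mul_div, mul_neg, neg_div_neg_eq,
    Real.iSup_mul_of_nonpos (Real.log_nonpos hu.1.le hu.2.le)]

/-- For an Archimedean copula C(u) = φ⁻¹(∑ φ(uᵢ)) whose generator inverse satisfies that
−log φ⁻¹ is regularly varying at ∞ with index λ > 0, the weak lower tail dependence
function is χ(α) = max αᵢ / (∑ αᵢ^{1/λ})^λ. -/
theorem archimedean_chi (n : ℕ) (hn : 0 < n) (lam : ℝ) (hlam : 0 < lam)
    (φ φinv : ℝ → ℝ)
    (hφcont : ContinuousOn φ (Set.Ioc 0 1))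
    (hφanti : StrictAntiOn φ (Set.Ioc 0 1))
    (hφ1 : φ 1 = 0)
    (hφnonneg : ∀ u ∈ Set.Ioc (0:ℝ) 1, 0 ≤ φ u)
    (hinvl : ∀ u ∈ Set.Ioc (0:ℝ) 1, φinv (φ u) = u)
    (hinvr : ∀ s : ℝ, 0 ≤ s → φ (φinv s) = s)
    (hinvrange : ∀ s : ℝ, 0 ≤ s → φinv s ∈ Set.Ioc (0:ℝ) 1)
    (hrv : ∀ t > (0 : ℝ),
      Tendsto (fun x => (-Real.log (φinv (t * x))) / (-Real.log (φinv x)))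
        atTop (nhds (t ^ lam))) :
    ∀ α : Fin n → ℝ, (∀ i, 0 < α i) →
      Tendsto (fun u : ℝ =>
          (⨅ i, α i * Real.log u) / Real.log (φinv (∑ i, φ (u ^ α i))))
        (nhdsWithin 0 (Set.Ioi 0))
        (nhds ((⨆ i, α i) / (∑ i, (α i) ^ (1 / lam)) ^ lam)) :=
  archimedean_chi_general n hn lam hlam φ φinv hφanti hφnonneg hinvl hinvr hinvrange hrv
end

section
/- Let M(y) = a(y)e^{−b(y)} for y ≥ c > 0, where b(y) = B(log y) with B(u) = Au²/2 for a constant A > 0, and a(y) = y^{−p}(log y)^{q} for constants p, q ∈ ℝ. Then the fractional integral F₂M(σ) = ∫_σ^∞ (τ−σ)M(τ)dτ satisfies F₂M(σ) ~ M(σ)/b'(σ)² as σ → ∞, where b'(σ) = A·log(σ)/σ. -/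
/-!
Substituting `τ = σ (1 + t / (A log σ))` turns the quotient into `∫₀^∞ t · M(τ) / M(σ) dt`.
With `s = log σ` the ratio is `exp (Φ (s + log (1 + t / (A s))) - Φ s)`, where
`Φ u = -p u + q log u - A u² / 2`; this exponent tends to `-t` because
`A s · log (1 + t / (A s)) → t`. For large `s` it is at most `-(A s / 2) log (1 + t / (A s))`,
which Bernoulli's inequality bounds by `-3 log (1 + t / 6)`, so `t (1 + t / 6)⁻³` dominates and
dominated convergence gives the limit `∫₀^∞ t e^{-t} dt = Γ 2 = 1`.
-/

open Filter MeasureTheory Set Topology Real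

lemma log_one_add_mul_le {a x : ℝ} (ha : 1 ≤ a) (hx : 0 ≤ x) :
    log (1 + a * x) ≤ a * log (1 + x) := by
  rw [← log_rpow (by linarith)]
  exact log_le_log (by positivity) (one_add_mul_self_le_rpow_one_add (by linarith) ha)

lemma integral_mul_exp_neg_Ioi : ∫ t in Ioi (0 : ℝ), t * exp (-t) = 1 := by
  have h := integral_rpow_mul_exp_neg_mul_Ioi (a := 2) (r := 1) two_pos one_pos
  norm_num [Gamma_two] at h
  exact h

lemma mul_exp_neg_three_mul_log_le {t : ℝ} (ht : 0 ≤ t) :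
    t * exp (-3 * log (1 + t / 6)) ≤ 216 * (1 + ‖t‖) ^ (-2 : ℝ) := by
  have hcube : exp (-3 * log (1 + t / 6)) = 216 / (6 + t) ^ 3 := by
    rw [mul_comm, ← rpow_def_of_pos (by positivity), rpow_neg (by positivity), rpow_ofNat]
    field_simp
    ring
  have hsquare : (1 + ‖t‖) ^ (-2 : ℝ) = 1 / (1 + t) ^ 2 := by
    rw [norm_of_nonneg ht, rpow_neg (by positivity), rpow_ofNat, one_div]
  rw [hcube, hsquare, mul_div_assoc', mul_one_div, div_le_div_iff₀ (by positivity) (by positivity)]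
  nlinarith [sq_nonneg t]

lemma integral_Ioi_sub_smul_eq {E : Type*} [NormedAddCommGroup E] [NormedSpace ℝ E]
    (f : ℝ → E) (σ : ℝ) {c : ℝ} (hc : 0 < c) :
    ∫ τ in Ioi σ, (τ - σ) • f τ = c ^ 2 • ∫ t in Ioi 0, t • f (σ + c * t) := by
  set g : ℝ → E := fun τ => (τ - σ) • f τ
  have translate : ∫ τ in Ioi σ, g τ = ∫ x in Ioi 0, g (x + σ) := by
    have h := (measurePreserving_add_right volume σ).setIntegral_preimage_emb
      (MeasurableEquiv.addRight σ).measurableEmbedding g (Ioi σ)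
    rwa [preimage_add_const_Ioi, sub_self, eq_comm] at h
  have dilate := integral_comp_mul_left_Ioi' (fun x => g (x + σ)) 0 hc
  rw [mul_zero] at dilate
  rw [translate, ← dilate]
  simp only [g, add_sub_cancel_right, mul_smul]
  rw [integral_smul, smul_smul, ← sq]
  simp only [add_comm _ σ]

namespace LogGaussian

variable (A p q : ℝ)

noncomputable def weight (y : ℝ) : ℝ :=
  y ^ (-p) * log y ^ q * exp (-A * log y ^ 2 / 2)

noncomputable def exponent (u : ℝ) : ℝ := -p * u + q * log u - A * u ^ 2 / 2

noncomputable def ratioExponent (s t : ℝ) : ℝ :=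
  exponent A p q (s + log (1 + t / (A * s))) - exponent A p q s

variable {A p q}

lemma weight_eq_exp_exponent {y : ℝ} (hy : 1 < y) :
    weight A p q y = exp (exponent A p q (log y)) := by
  rw [weight, exponent, rpow_def_of_pos (by linarith), rpow_def_of_pos (log_pos hy),
    ← exp_add, ← exp_add]
  ring_nf

lemma exponent_add_sub (s L : ℝ) : exponent A p q (s + L) - exponent A p q s =
    -p * L + q * (log (s + L) - log s) - A * s * L - A * L ^ 2 / 2 := by
  unfold exponent
  ring

lemma exponent_add_sub_le (hA : 0 ≤ A) {s L : ℝ} (hs : 1 ≤ s) (hL : 0 ≤ L) :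
    exponent A p q (s + L) - exponent A p q s ≤ (|p| + |q| - A * s) * L := by
  have hlog_nonneg : 0 ≤ log (s + L) - log s :=
    sub_nonneg.2 (log_le_log (by linarith) (by linarith))
  have hlog_le : log (s + L) - log s ≤ L := by
    rw [← log_div (by linarith) (by linarith)]
    calc log ((s + L) / s) ≤ (s + L) / s - 1 := log_le_sub_one_of_pos (by positivity)
      _ = L / s := by field_simp; ring
      _ ≤ L := div_le_self hL hs
  have hp : -p * L ≤ |p| * L := mul_le_mul_of_nonneg_right (neg_le_abs p) hL
  have hq : q * (log (s + L) - log s) ≤ |q| * L :=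
    (mul_le_mul_of_nonneg_right (le_abs_self q) hlog_nonneg).trans
      (mul_le_mul_of_nonneg_left hlog_le (abs_nonneg q))
  have hsq : 0 ≤ A * L ^ 2 / 2 := by positivity
  rw [exponent_add_sub]
  linarith

lemma ratioExponent_le (hA : 0 < A) {s t : ℝ} (hs : 1 ≤ s)
    (hAs : 2 * (|p| + |q|) + 6 ≤ A * s) (ht : 0 ≤ t) :
    ratioExponent A p q s t ≤ -3 * log (1 + t / 6) := by
  set n := A * s
  have hn : 0 < n := by positivity
  have htn : 0 ≤ t / n := div_nonneg ht hn.le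
  set L := log (1 + t / n)
  have hL : 0 ≤ L := log_nonneg (by linarith)
  have bernoulli : log (1 + t / 6) ≤ n / 6 * L := by
    have h := log_one_add_mul_le (a := n / 6) (by linarith [abs_nonneg p, abs_nonneg q]) htn
    rwa [show n / 6 * (t / n) = t / 6 by field_simp] at h
  calc ratioExponent A p q s t ≤ (|p| + |q| - n) * L := exponent_add_sub_le hA.le hs hL
    _ ≤ -(n / 2) * L := mul_le_mul_of_nonneg_right (by linarith [abs_nonneg p, abs_nonneg q]) hL
    _ ≤ -3 * log (1 + t / 6) := by linarith

lemma tendsto_ratioExponent (hA : 0 < A) (t : ℝ) :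
    Tendsto (fun s => ratioExponent A p q s t) atTop (𝓝 (-t)) := by
  have hn : Tendsto (fun s => A * s) atTop atTop := tendsto_id.const_mul_atTop hA
  have hL : Tendsto (fun s => log (1 + t / (A * s))) atTop (𝓝 0) := by
    have h := tendsto_const_nhds (x := (1 : ℝ)).add
      (tendsto_const_nhds.div_atTop hn : Tendsto (fun s => t / (A * s)) atTop (𝓝 0))
    simpa using h.log (by norm_num)
  have hnL : Tendsto (fun s => A * s * log (1 + t / (A * s))) atTop (𝓝 t) :=
    (tendsto_mul_log_one_add_div_atTop t).comp hn
  have hlog_sub : Tendsto (fun s => log (s + log (1 + t / (A * s))) - log s) atTop (𝓝 0) := by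
    have h := tendsto_const_nhds (x := (1 : ℝ)).add (hL.div_atTop tendsto_id)
    have h' := h.log (by norm_num)
    rw [add_zero, log_one] at h'
    refine h'.congr' ?_
    filter_upwards [eventually_gt_atTop 0, (tendsto_id.atTop_add hL).eventually_gt_atTop 0]
      with s hs hsL
    change 0 < s + _ at hsL
    rw [id, ← log_div hsL.ne' hs.ne', add_div, div_self hs.ne', add_comm]
  have h := (((hL.const_mul (-p)).add (hlog_sub.const_mul q)).sub hnL).sub
    (((hL.pow 2).const_mul A).div_const 2)
  convert h using 1
  · exact funext fun s => exponent_add_sub _ _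
  · norm_num

lemma tendsto_integral_mul_exp_ratioExponent (hA : 0 < A) :
    Tendsto (fun s => ∫ t in Ioi 0, t * exp (ratioExponent A p q s t)) atTop (𝓝 1) := by
  rw [← integral_mul_exp_neg_Ioi]
  refine tendsto_integral_filter_of_dominated_convergence
    (fun t => 216 * (1 + ‖t‖) ^ (-2 : ℝ)) ?_ ?_ ?_ ?_
  · refine Eventually.of_forall fun s => Measurable.aestronglyMeasurable ?_
    unfold ratioExponent exponent
    fun_prop
  · filter_upwards [eventually_ge_atTop 1,
      (tendsto_id.const_mul_atTop hA).eventually_ge_atTop (2 * (|p| + |q|) + 6)] with s hs hAs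
    rw [ae_restrict_iff' measurableSet_Ioi]
    refine ae_of_all _ fun t (ht : 0 < t) => ?_
    rw [norm_of_nonneg (by positivity)]
    calc t * exp (ratioExponent A p q s t) ≤ t * exp (-3 * log (1 + t / 6)) := by
          gcongr
          exact ratioExponent_le hA hs hAs ht.le
      _ ≤ 216 * (1 + ‖t‖) ^ (-2 : ℝ) := mul_exp_neg_three_mul_log_le ht.le
  · exact ((integrable_one_add_norm (by norm_num)).const_mul _).integrableOn
  · exact ae_of_all _ fun t =>
      ((continuous_exp.tendsto _).comp (tendsto_ratioExponent hA t)).const_mul t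

lemma weight_div_weight (hA : 0 < A) {σ t : ℝ} (hσ : 1 < σ) (ht : 0 ≤ t) :
    weight A p q (σ + σ / (A * log σ) * t) / weight A p q σ =
      exp (ratioExponent A p q (log σ) t) := by
  have hs : 0 < log σ := log_pos hσ
  have hr : 1 ≤ 1 + t / (A * log σ) := le_add_of_nonneg_right (by positivity)
  have hscale : σ + σ / (A * log σ) * t = σ * (1 + t / (A * log σ)) := by field_simp
  rw [hscale, weight_eq_exp_exponent hσ,
    weight_eq_exp_exponent (one_lt_mul_of_lt_of_le hσ hr), ← exp_sub,
    log_mul (by positivity) (by positivity), ratioExponent]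

lemma integral_sub_mul_weight_div (hA : 0 < A) {σ : ℝ} (hσ : 1 < σ) :
    (∫ τ in Ioi σ, (τ - σ) * weight A p q τ) / (weight A p q σ / (A * log σ / σ) ^ 2) =
      ∫ t in Ioi 0, t * exp (ratioExponent A p q (log σ) t) := by
  have hs : 0 < log σ := log_pos hσ
  have hc : 0 < σ / (A * log σ) := by positivity
  have hrescale := integral_Ioi_sub_smul_eq (weight A p q) σ hc
  simp only [smul_eq_mul] at hrescale
  have hcancel : ∀ I : ℝ, (σ / (A * log σ)) ^ 2 * I / (weight A p q σ / (A * log σ / σ) ^ 2) =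
      I / weight A p q σ := fun I => by field_simp
  rw [hrescale, hcancel, ← integral_div]
  refine setIntegral_congr_fun measurableSet_Ioi fun t ht => ?_
  rw [mul_div_assoc, weight_div_weight hA hσ (le_of_lt ht)]

end LogGaussian

/-- For M(y) = y^{−p}(log y)^q exp(−A(log y)²/2) with A > 0, the fractional integral of
order two F₂M(σ) = ∫_σ^∞ (τ−σ)M(τ)dτ satisfies F₂M(σ) ~ M(σ)/b'(σ)² as σ → ∞, where
b'(σ) = A log(σ)/σ. -/
theorem fractional_integral_asymp (A p q : ℝ) (hA : 0 < A) :
    Tendsto (fun σ : ℝ =>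
        (∫ τ in Set.Ioi σ, (τ - σ) *
            (τ ^ (-p) * Real.log τ ^ q * Real.exp (-A * Real.log τ ^ 2 / 2))) /
          ((σ ^ (-p) * Real.log σ ^ q * Real.exp (-A * Real.log σ ^ 2 / 2)) /
            (A * Real.log σ / σ) ^ 2))
      atTop (nhds 1) := by
  refine (((LogGaussian.tendsto_integral_mul_exp_ratioExponent (p := p) (q := q) hA).comp
    tendsto_log_atTop).congr' ?_)
  filter_upwards [eventually_gt_atTop 1] with σ hσ
  exact (LogGaussian.integral_sub_mul_weight_div hA hσ).symm
end
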